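/- For every integer n ≥ 1 and real r > 0, let p = (r, 0, …, 0) ∈ S^n_r and q = −p. Then the real subspaces DW_p({v ∈ ℝ^{n+1} : ⟨p, v⟩ = 0}) and DW_q({v ∈ ℝ^{n+1} : ⟨q, v⟩ = 0}) of ℂ^n are complementary: their intersection is {0} and their sum is all of ℂ^n (explicitly, they equal (1 + 2ir)·ℝ^n and (1 − 2ir)·ℝ^n). That is, the self-intersection of the Whitney sphere is transverse. -/

import Mathlib

open scoped BigOperators RealInnerProductSpace

/-- The Whitney sphere parameterization `W : ℝ^{n+1} → ℂ^n`,
`W(x)_j = x_j + 2i·x_0·x_j` for `1 ≤ j ≤ n`. -/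
noncomputable def whitney (n : ℕ) (x : EuclideanSpace ℝ (Fin (n + 1))) : Fin n → ℂ :=
  fun j => (x j.succ : ℂ) + 2 * Complex.I * (x 0 : ℂ) * (x j.succ : ℂ)

/-!
At `±p` the first coordinate is `±r` and the others vanish, so `DW_{±p}` sends a tangent
vector `(0, v)` to `(1 ± 2ir)·v`. The real lines `(1 + 2ir)·ℝ` and `(1 - 2ir)·ℝ` in `ℂ` are
independent over `ℝ`, their determinant being `-4r ≠ 0`, so Cramer's rule, applied
coordinatewise, splits every `z ∈ ℂ^n` uniquely.
-/

namespace Complex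

variable {a b : ℂ}

theorem eq_zero_of_mul_ofReal_eq_mul_ofReal (hab : a.re * b.im - a.im * b.re ≠ 0) {u w : ℝ}
    (h : a * u = b * w) : u = 0 := by
  have hre := congrArg re h
  have him := congrArg im h
  simp only [mul_re, mul_im, ofReal_re, ofReal_im, mul_zero, sub_zero, zero_add] at hre him
  have : u * (a.re * b.im - a.im * b.re) = 0 := by
    linear_combination b.im * hre - b.re * him
  exact (mul_eq_zero.mp this).resolve_right hab

theorem exists_eq_mul_ofReal_add_mul_ofReal (hab : a.re * b.im - a.im * b.re ≠ 0) (z : ℂ) :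
    ∃ u w : ℝ, z = a * u + b * w := by
  set d := a.re * b.im - a.im * b.re with hd
  refine ⟨(b.im * z.re - b.re * z.im) / d, (a.re * z.im - a.im * z.re) / d, ?_⟩
  apply Complex.ext <;>
  · simp only [add_re, add_im, mul_re, mul_im, ofReal_re, ofReal_im, mul_zero, sub_zero,
      zero_add]
    field_simp
    linear_combination (-z.re) * hd

end Complex

def realMultiples (a : ℂ) (n : ℕ) : Set (Fin n → ℂ) :=
  {z | ∃ v : Fin n → ℝ, ∀ j, z j = a * v j}

section realMultiples

variable {a b : ℂ} {n : ℕ}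

theorem realMultiples_inter_realMultiples (hab : a.re * b.im - a.im * b.re ≠ 0) :
    realMultiples a n ∩ realMultiples b n = {0} := by
  ext z
  constructor
  · rintro ⟨⟨u, hu⟩, ⟨w, hw⟩⟩
    funext j
    rw [hu j, Complex.eq_zero_of_mul_ofReal_eq_mul_ofReal hab ((hu j).symm.trans (hw j))]
    simp
  · rintro rfl
    exact ⟨⟨0, fun j => by simp⟩, ⟨0, fun j => by simp⟩⟩

theorem exists_eq_add_of_mem_realMultiples (hab : a.re * b.im - a.im * b.re ≠ 0)
    (z : Fin n → ℂ) : ∃ x ∈ realMultiples a n, ∃ y ∈ realMultiples b n, z = x + y := by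
  choose u w huw using fun j => Complex.exists_eq_mul_ofReal_add_mul_ofReal hab (z j)
  exact ⟨fun j => a * u j, ⟨u, fun _ => rfl⟩, fun j => b * w j, ⟨w, fun _ => rfl⟩, funext huw⟩

end realMultiples

theorem fderiv_whitney_apply (n : ℕ) (x v : EuclideanSpace ℝ (Fin (n + 1))) (j : Fin n) :
    fderiv ℝ (whitney n) x v j
      = (1 + 2 * Complex.I * (x 0 : ℂ)) * (v j.succ : ℂ)
        + 2 * Complex.I * (x j.succ : ℂ) * (v 0 : ℂ) := by
  have hcoord (k : Fin (n + 1)) :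
      HasFDerivAt (fun y : EuclideanSpace ℝ (Fin (n + 1)) => (y k : ℂ))
        (Complex.ofRealCLM.comp (EuclideanSpace.proj k)) x :=
    (Complex.ofRealCLM.comp (EuclideanSpace.proj k)).hasFDerivAt
  have hW : HasFDerivAt (whitney n) (ContinuousLinearMap.pi fun j => _) x :=
    hasFDerivAt_pi.2 fun j =>
      (hcoord j.succ).add (((hcoord 0).const_mul (2 * Complex.I)).mul (hcoord j.succ))
  rw [hW.fderiv]
  simp only [ContinuousLinearMap.coe_pi', add_apply, ContinuousLinearMap.comp_apply,
    PiLp.proj_apply, Complex.ofRealCLM_apply, smul_apply, smul_eq_mul]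
  ring

theorem fderiv_whitney_single_apply (n : ℕ) (c : ℝ) (v : EuclideanSpace ℝ (Fin (n + 1)))
    (j : Fin n) :
    fderiv ℝ (whitney n) (EuclideanSpace.single 0 c) v j
      = (1 + 2 * Complex.I * (c : ℂ)) * (v j.succ : ℂ) := by
  simp [fderiv_whitney_apply, Fin.succ_ne_zero]

theorem fderiv_whitney_single_image {n : ℕ} {c : ℝ} (hc : c ≠ 0) :
    fderiv ℝ (whitney n) (EuclideanSpace.single 0 c) ''
        {v | ⟪EuclideanSpace.single 0 c, v⟫ = 0}
      = realMultiples (1 + 2 * Complex.I * (c : ℂ)) n := by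
  ext z
  simp only [Set.mem_image, Set.mem_ofPred_eq, EuclideanSpace.inner_single_left,
    conj_trivial, mul_eq_zero, hc, false_or]
  constructor
  · rintro ⟨v, -, rfl⟩
    exact ⟨fun j => v j.succ, fderiv_whitney_single_apply n c v⟩
  · rintro ⟨w, hw⟩
    refine ⟨WithLp.toLp 2 (Fin.cons 0 w), by simp, funext fun j => ?_⟩
    simp [fderiv_whitney_single_apply, hw j]

theorem stmt8_general (n : ℕ) (r : ℝ) (hr : 0 < r) :
    let p : EuclideanSpace ℝ (Fin (n + 1)) := EuclideanSpace.single 0 r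
    let A : Set (Fin n → ℂ) := fderiv ℝ (whitney n) p '' {v | ⟪p, v⟫ = 0}
    let B : Set (Fin n → ℂ) := fderiv ℝ (whitney n) (-p) '' {v | ⟪-p, v⟫ = 0}
    A = {z | ∃ v : Fin n → ℝ, ∀ j, z j = (1 + 2 * Complex.I * (r : ℂ)) * (v j : ℂ)} ∧
    B = {z | ∃ v : Fin n → ℝ, ∀ j, z j = (1 - 2 * Complex.I * (r : ℂ)) * (v j : ℂ)} ∧
    A ∩ B = {0} ∧
    (∀ z : Fin n → ℂ, ∃ a ∈ A, ∃ b ∈ B, z = a + b) := by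
  intro p A B
  have hA : A = realMultiples (1 + 2 * Complex.I * (r : ℂ)) n :=
    fderiv_whitney_single_image hr.ne'
  have hB : B = realMultiples (1 - 2 * Complex.I * (r : ℂ)) n := by
    have hp : -p = EuclideanSpace.single 0 (-r) := (PiLp.single_neg 2 0).symm
    simp only [B, hp, fderiv_whitney_single_image (neg_ne_zero.2 hr.ne')]
    congr 1
    push_cast
    ring
  have hdet : (1 + 2 * Complex.I * (r : ℂ)).re * (1 - 2 * Complex.I * (r : ℂ)).im
      - (1 + 2 * Complex.I * (r : ℂ)).im * (1 - 2 * Complex.I * (r : ℂ)).re ≠ 0 := by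
    norm_num
    linarith
  rw [hA, hB]
  exact ⟨rfl, rfl, realMultiples_inter_realMultiples hdet,
    exists_eq_add_of_mem_realMultiples hdet⟩

/-- The self-intersection of the Whitney sphere is transverse: with `p = (r, 0, …, 0)` and
`q = −p`, the images of the tangent spaces of `S^n_r` at `p` and `q` under `DW` are the real
subspaces `(1 + 2ir)·ℝ^n` and `(1 − 2ir)·ℝ^n` of `ℂ^n`, and these are complementary. -/
theorem stmt8 (n : ℕ) (hn : 1 ≤ n) (r : ℝ) (hr : 0 < r) :
    let p : EuclideanSpace ℝ (Fin (n + 1)) := EuclideanSpace.single 0 r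
    let A : Set (Fin n → ℂ) := fderiv ℝ (whitney n) p '' {v | ⟪p, v⟫ = 0}
    let B : Set (Fin n → ℂ) := fderiv ℝ (whitney n) (-p) '' {v | ⟪-p, v⟫ = 0}
    A = {z | ∃ v : Fin n → ℝ, ∀ j, z j = (1 + 2 * Complex.I * (r : ℂ)) * (v j : ℂ)} ∧
    B = {z | ∃ v : Fin n → ℝ, ∀ j, z j = (1 - 2 * Complex.I * (r : ℂ)) * (v j : ℂ)} ∧
    A ∩ B = {0} ∧
    (∀ z : Fin n → ℂ, ∃ a ∈ A, ∃ b ∈ B, z = a + b) :=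
  stmt8_general n r hr
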